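/- There exists a MAPF instance, a total priority ordering ≺ on its agents, and a solution L* consistent with ≺ whose flowtime equals the minimum flowtime over all solutions (so the instance is OP-solvable), together with a path π' for the ≺-highest-priority agent a_h whose arrival time equals the graph distance from s_h to t_h in G (an individually optimal path for a_h), such that no solution consistent with ≺ assigns the path π' to agent a_h; hence prioritized planning with the correct total priority ordering but an unlucky tie-breaking choice of the highest-priority agent's individually optimal path can fail to find any solution, even on OP-solvable instances. -/

import Mathlib

/-- Two (space-time) paths have a vertex collision: same vertex at the same time. -/
def VCol {V : Type} (π σ : ℕ → V) : Prop := ∃ t, π t = σ t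

/-- Two (space-time) paths have an edge collision: they traverse the same edge in
opposite directions at the same time. -/
def ECol {V : Type} (π σ : ℕ → V) : Prop := ∃ t, π t = σ (t + 1) ∧ π (t + 1) = σ t

/-- Two paths collide if they have a vertex collision or an edge collision. -/
def Collide {V : Type} (π σ : ℕ → V) : Prop := VCol π σ ∨ ECol π σ

/-- `π : ℕ → V` is a path from `s` to `t` in `G`: it starts at `s`, at each time step
it stays put or moves along an edge of `G`, and it is eventually always at `t`. -/
def IsPathFun {V : Type} (G : SimpleGraph V) (s t : V) (π : ℕ → V) : Prop :=
  π 0 = s ∧ (∀ n, π (n + 1) = π n ∨ G.Adj (π n) (π (n + 1))) ∧ ∃ T, ∀ n ≥ T, π n = t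

/-- The arrival time of a path at a target vertex `tgt`: the least time `T` such that
the path is at `tgt` at all times `≥ T`. -/
noncomputable def arrivalTime {V : Type} (tgt : V) (π : ℕ → V) : ℕ :=
  sInf {T | ∀ n ≥ T, π n = tgt}

/-- A MAPF instance: a connected undirected graph and `M` agents with pairwise distinct
start vertices and pairwise distinct target vertices. -/
structure MAPF where
  V : Type
  G : SimpleGraph V
  conn : G.Connected
  M : ℕ
  s : Fin M → V
  t : Fin M → V
  s_inj : Function.Injective s
  t_inj : Function.Injective t

/-- `π` is a path for agent `i` of the MAPF instance `P`. -/
def MAPF.IsPath (P : MAPF) (i : Fin P.M) (π : ℕ → P.V) : Prop :=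
  IsPathFun P.G (P.s i) (P.t i) π

/-- The arrival time of agent `i`'s path `π`. -/
noncomputable def MAPF.arr (P : MAPF) (i : Fin P.M) (π : ℕ → P.V) : ℕ :=
  arrivalTime (P.t i) π

/-- A solution: a path for each agent such that no two paths collide. -/
def MAPF.Solution (P : MAPF) (π : Fin P.M → ℕ → P.V) : Prop :=
  (∀ i, P.IsPath i (π i)) ∧ ∀ i j, i ≠ j → ¬ Collide (π i) (π j)

/-- A priority ordering: a strict partial order (irreflexive and transitive relation)
on the agents. -/
def IsPO {M : ℕ} (r : Fin M → Fin M → Prop) : Prop :=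
  (∀ i, ¬ r i i) ∧ ∀ i j k, r i j → r j k → r i k

/-- A total priority ordering: a strict total order on the agents. -/
def IsTotalPO {M : ℕ} (r : Fin M → Fin M → Prop) : Prop :=
  IsPO r ∧ ∀ i j : Fin M, i ≠ j → r i j ∨ r j i

/-- A plan `π` is consistent with a priority ordering `r`: for every agent `i`, the
arrival time of `π i` is the minimum arrival time over all paths for agent `i` that
have no collision with `π j` for every higher-priority agent `j` (`r j i`). -/
def MAPF.Consistent (P : MAPF) (π : Fin P.M → ℕ → P.V)
    (r : Fin P.M → Fin P.M → Prop) : Prop :=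
  ∀ i, IsLeast {T | ∃ σ, P.IsPath i σ ∧ (∀ j, r j i → ¬ Collide σ (π j)) ∧ P.arr i σ = T}
    (P.arr i (π i))

/-- A MAPF instance is P-solvable if it admits a solution consistent with some
priority ordering. -/
def MAPF.PSolvable (P : MAPF) : Prop :=
  ∃ π r, IsPO r ∧ P.Solution π ∧ P.Consistent π r

/-- The flowtime of a plan: the sum of the arrival times of all agents. -/
noncomputable def MAPF.flowtime (P : MAPF) (π : Fin P.M → ℕ → P.V) : ℕ :=
  ∑ i, P.arr i (π i)

/-- The makespan of a plan: the maximum of the arrival times of all agents. -/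
noncomputable def MAPF.makespan (P : MAPF) (π : Fin P.M → ℕ → P.V) : ℕ :=
  Finset.univ.sup fun i => P.arr i (π i)

/-- A MAPF instance is well-formed if every agent has a (finite) walk from its start
vertex to its target vertex that visits neither the start vertex nor the target vertex
of any other agent. -/
def MAPF.WellFormed (P : MAPF) : Prop :=
  ∀ i, ∃ w : P.G.Walk (P.s i) (P.t i),
    ∀ j, j ≠ i → P.s j ∉ w.support ∧ P.t j ∉ w.support


/-!
The witness has three agents on a ten-vertex graph. The top agent goes from `0` to `3`, along
the corridor `0-1-2-3` or along the detour `0-4-5-3`; the middle agent goes from `9`, a leaf at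
`1`, to `5`; the bottom agent starts in the pocket `{6, 7}`, attached to the rest of the graph
only at `5`, and goes to `8`, a leaf at `4`.

The three agents cannot all be fast: a fast middle agent is at `1` at time 1, a fast bottom
agent is at `5` at time 2, and a fast top agent is at one of these. With the top agent on the
corridor and the middle agent waiting once, the flowtime `3 + 5 + 4` is therefore optimal.
With the top agent on the detour, the middle agent's best path `9,1,0,4,5` holds `5` from time 4
on. The bottom agent can leave the pocket only through `5`; the top agent holds it at time 2,
and from `5` at time 3 the only move is back into the pocket, so it is trapped for ever.
-/

section Paths

variable {V : Type}

theorem Collide.symm {π σ : ℕ → V} (h : Collide π σ) : Collide σ π := by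
  rcases h with ⟨t, ht⟩ | ⟨t, h₁, h₂⟩
  · exact Or.inl ⟨t, ht.symm⟩
  · exact Or.inr ⟨t, h₂.symm, h₁.symm⟩

theorem not_collide_of_forall_le {π σ : ℕ → V} {N : ℕ} (hπ : ∀ n ≥ N, π n = π N)
    (hσ : ∀ n ≥ N, σ n = σ N)
    (h : ∀ n ≤ N, π n ≠ σ n ∧ (π n ≠ σ (n + 1) ∨ π (n + 1) ≠ σ n)) : ¬ Collide π σ := by
  have hN : π N ≠ σ N := (h N le_rfl).1
  rintro (⟨t, ht⟩ | ⟨t, h₁, h₂⟩)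
  · rcases le_or_gt t N with htN | htN
    · exact (h t htN).1 ht
    · exact hN (by rw [← hπ t htN.le, ← hσ t htN.le, ht])
  · rcases le_or_gt t N with htN | htN
    · rcases (h t htN).2 with h | h
      · exact h h₁
      · exact h h₂
    · exact hN (by rw [← hπ t htN.le, ← hσ (t + 1) (by omega), h₁])

theorem arrivalTime_le {tgt : V} {π : ℕ → V} {T : ℕ} (h : ∀ n ≥ T, π n = tgt) :
    arrivalTime tgt π ≤ T :=
  Nat.sInf_le h

theorem IsPathFun.apply_of_arrivalTime_le {G : SimpleGraph V} {s t : V} {π : ℕ → V}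
    (hπ : IsPathFun G s t π) {n : ℕ} (hn : arrivalTime t π ≤ n) : π n = t :=
  Nat.sInf_mem (s := {T | ∀ n ≥ T, π n = t}) hπ.2.2 n hn

def listPath (l : List V) (t : V) (n : ℕ) : V := l.getD n t

theorem listPath_of_length_le {l : List V} {t : V} {n : ℕ} (hn : l.length ≤ n) :
    listPath l t n = t :=
  List.getD_eq_default _ _ hn

theorem arrivalTime_listPath_le (l : List V) (t : V) :
    arrivalTime t (listPath l t) ≤ l.length :=
  arrivalTime_le fun _ => listPath_of_length_le

theorem isPathFun_listPath {G : SimpleGraph V} {s t : V} {l : List V} (h₀ : listPath l t 0 = s)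
    (hstep : ∀ n < l.length,
      listPath l t (n + 1) = listPath l t n ∨ G.Adj (listPath l t n) (listPath l t (n + 1))) :
    IsPathFun G s t (listPath l t) := by
  refine ⟨h₀, fun n => ?_, l.length, fun _ => listPath_of_length_le⟩
  rcases lt_or_ge n l.length with hn | hn
  · exact hstep n hn
  · exact Or.inl (by rw [listPath_of_length_le hn, listPath_of_length_le (by omega)])

theorem not_collide_listPath {l l' : List V} {t t' : V}
    (h : ∀ n ≤ max l.length l'.length, listPath l t n ≠ listPath l' t' n ∧
      (listPath l t n ≠ listPath l' t' (n + 1) ∨ listPath l t (n + 1) ≠ listPath l' t' n)) :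
    ¬ Collide (listPath l t) (listPath l' t') :=
  not_collide_of_forall_le
    (fun n hn => by rw [listPath_of_length_le (by omega), listPath_of_length_le (by omega)])
    (fun n hn => by rw [listPath_of_length_le (by omega), listPath_of_length_le (by omega)]) h

theorem Nat.exists_ge_and_not_succ {P : ℕ → Prop} {t₀ T : ℕ} (h₀ : P t₀) (hT : t₀ ≤ T)
    (hPT : ¬ P T) : ∃ t ≥ t₀, P t ∧ ¬ P (t + 1) := by
  by_contra! H
  exact hPT (Nat.le_induction h₀ (fun n hn hPn => H n hn hPn) T hT)

end Paths

namespace SimpleGraph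

variable {V : Type} [DecidableEq V] (G : SimpleGraph V) [G.LocallyFinite]

def ballFinset (v : V) : ℕ → Finset V
  | 0 => {v}
  | k + 1 => ballFinset v k ∪ (ballFinset v k).biUnion fun u => G.neighborFinset u

variable {G}

theorem exists_walk_of_mem_ballFinset {v w : V} {k : ℕ} (h : w ∈ G.ballFinset v k) :
    ∃ p : G.Walk v w, p.length ≤ k := by
  induction k generalizing w with
  | zero =>
    obtain rfl : w = v := Finset.mem_singleton.mp h
    exact ⟨.nil, le_rfl⟩
  | succ k ih =>
    simp only [ballFinset, Finset.mem_union, Finset.mem_biUnion, mem_neighborFinset] at h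
    rcases h with h | ⟨u, hu, huw⟩
    · obtain ⟨p, hp⟩ := ih h
      exact ⟨p, by omega⟩
    · obtain ⟨p, hp⟩ := ih hu
      exact ⟨p.concat huw, by rw [Walk.length_concat]; omega⟩

theorem mem_ballFinset_of_step {σ : ℕ → V} (hσ : ∀ n, σ (n + 1) = σ n ∨ G.Adj (σ n) (σ (n + 1)))
    (m k : ℕ) : σ (m + k) ∈ G.ballFinset (σ m) k := by
  induction k with
  | zero => exact Finset.mem_singleton_self _
  | succ k ih =>
    simp only [ballFinset, Finset.mem_union, Finset.mem_biUnion, mem_neighborFinset]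
    rcases hσ (m + k) with h | h
    · exact Or.inl (by rw [← add_assoc, h]; exact ih)
    · exact Or.inr ⟨_, ih, h⟩

theorem dist_le_of_mem_ballFinset {v w : V} {k : ℕ} (h : w ∈ G.ballFinset v k) :
    G.dist v w ≤ k :=
  (exists_walk_of_mem_ballFinset h).elim fun p hp => (dist_le p).trans hp

end SimpleGraph

section PathBounds

open SimpleGraph

variable {V : Type} [DecidableEq V] {G : SimpleGraph V} [G.LocallyFinite] {s t : V} {σ : ℕ → V}

theorem IsPathFun.mem_ballFinset (hσ : IsPathFun G s t σ) (k : ℕ) :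
    σ k ∈ G.ballFinset s k := by
  simpa [hσ.1] using mem_ballFinset_of_step hσ.2.1 0 k

theorem IsPathFun.mem_ballFinset_of_arrivalTime_le (hσ : IsPathFun G s t σ) {m k : ℕ}
    (hT : arrivalTime t σ ≤ m + k) :
    t ∈ G.ballFinset (σ m) k :=
  hσ.apply_of_arrivalTime_le hT ▸ mem_ballFinset_of_step hσ.2.1 m k

theorem IsPathFun.lt_arrivalTime {u : V} (hσ : IsPathFun G s t σ) {m k : ℕ}
    (hm : σ m = u) (ht : t ∉ G.ballFinset u k) : m + k < arrivalTime t σ := by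
  by_contra! H
  exact ht (hm ▸ hσ.mem_ballFinset_of_arrivalTime_le H)

end PathBounds

section Distance

variable {V : Type} {G : SimpleGraph V} {u v : V}

theorem SimpleGraph.Walk.isPathFun_getVert (p : G.Walk u v) : IsPathFun G u v p.getVert := by
  refine ⟨p.getVert_zero, fun n => ?_, p.length, fun n hn => p.getVert_of_length_le hn⟩
  rcases lt_or_ge n p.length with hn | hn
  · exact Or.inr (p.adj_getVert_succ hn)
  · exact Or.inl (by rw [p.getVert_of_length_le hn, p.getVert_of_length_le (by omega)])

theorem SimpleGraph.Reachable.le_dist_of_le_arrivalTime (h : G.Reachable u v) {k : ℕ} (hk : ∀ σ, IsPathFun G u v σ → k ≤ arrivalTime v σ) :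
    k ≤ G.dist u v := by
  obtain ⟨p, hp⟩ := h.exists_walk_length_eq_dist
  exact hp ▸ (hk _ p.isPathFun_getVert).trans (arrivalTime_le fun _ => p.getVert_of_length_le)

end Distance

theorem isTotalPO_lt (M : ℕ) : IsTotalPO fun i j : Fin M => i < j :=
  ⟨⟨lt_irrefl, fun _ _ _ => lt_trans⟩, fun _ _ => Ne.lt_or_gt⟩

namespace MAPF

variable {P : MAPF} {π : Fin P.M → ℕ → P.V}

theorem solution_of_lt (hpath : ∀ i, P.IsPath i (π i))
    (hcol : ∀ i j, i < j → ¬ Collide (π i) (π j)) : P.Solution π := by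
  refine ⟨hpath, fun i j hij hc => ?_⟩
  rcases hij.lt_or_gt with h | h
  · exact hcol i j h hc
  · exact hcol j i h hc.symm

theorem consistent_of_forall_le {r : Fin P.M → Fin P.M → Prop} (hπ : P.Solution π)
    (hr : ∀ i, ¬ r i i)
    (h : ∀ i σ, P.IsPath i σ → (∀ j, r j i → ¬ Collide σ (π j)) → P.arr i (π i) ≤ P.arr i σ) :
    P.Consistent π r :=
  fun i => ⟨⟨π i, hπ.1 i, fun j hji => hπ.2 i j (fun hij => hr i (hij ▸ hji)), rfl⟩,
    by rintro _ ⟨σ, hσ, hcol, rfl⟩; exact h i σ hσ hcol⟩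

end MAPF

namespace TrapExample

def edges : List (Fin 10 × Fin 10) :=
  [(0, 1), (1, 2), (2, 3), (0, 4), (4, 5), (5, 3), (5, 7), (7, 6), (4, 8), (1, 9)]

def graph : SimpleGraph (Fin 10) := SimpleGraph.fromRel fun a b => (a, b) ∈ edges

instance : DecidableRel graph.Adj := fun a b =>
  inferInstanceAs (Decidable (a ≠ b ∧ ((a, b) ∈ edges ∨ (b, a) ∈ edges)))

open SimpleGraph

theorem connected : graph.Connected :=
  (connected_iff_exists_forall_reachable _).mpr ⟨0, fun v =>
    (exists_walk_of_mem_ballFinset (k := 4) (by revert v; decide)).elim fun p _ => ⟨p⟩⟩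

def pocket : Finset (Fin 10) := {6, 7}

def topCorridor : ℕ → Fin 10 := listPath [0, 1, 2] 3
def topDetour : ℕ → Fin 10 := listPath [0, 4, 5] 3
def midDelayed : ℕ → Fin 10 := listPath [9, 9, 1, 0, 4] 5
def midDirect : ℕ → Fin 10 := listPath [9, 1, 0, 4] 5
def botPath : ℕ → Fin 10 := listPath [6, 7, 5, 4] 8

variable {σ : ℕ → Fin 10}

theorem three_le_arrivalTime_top (h : IsPathFun graph 0 3 σ) : 3 ≤ arrivalTime 3 σ :=
  h.lt_arrivalTime (m := 0) (k := 2) h.1 (by decide)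

theorem four_le_arrivalTime_mid (h : IsPathFun graph 9 5 σ) : 4 ≤ arrivalTime 5 σ :=
  h.lt_arrivalTime (m := 0) (k := 3) h.1 (by decide)

theorem four_le_arrivalTime_bot (h : IsPathFun graph 6 8 σ) : 4 ≤ arrivalTime 8 σ :=
  h.lt_arrivalTime (m := 0) (k := 3) h.1 (by decide)

theorem top_one_eq_one_or_two_eq_five (h : IsPathFun graph 0 3 σ) (hT : arrivalTime 3 σ ≤ 3) :
    σ 1 = 1 ∨ σ 2 = 5 :=
  key _ (h.mem_ballFinset 1) _ (mem_ballFinset_of_step h.2.1 1 1)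
    (h.mem_ballFinset_of_arrivalTime_le (m := 2) (k := 1) hT)
where
  key : ∀ x ∈ graph.ballFinset 0 1, ∀ y ∈ graph.ballFinset x 1,
    3 ∈ graph.ballFinset y 1 → x = 1 ∨ y = 5 := by decide

theorem five_le_arrivalTime_mid (h : IsPathFun graph 9 5 σ) (h₁ : σ 1 ≠ 1) :
    5 ≤ arrivalTime 5 σ := by
  by_contra! hT
  exact h₁ (key _ (h.mem_ballFinset 1) (h.mem_ballFinset_of_arrivalTime_le (m := 1) (k := 3)
    (by omega)))
where
  key : ∀ x ∈ graph.ballFinset 9 1, 5 ∈ graph.ballFinset x 3 → x = 1 := by decide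

theorem mid_three_eq_four (h : IsPathFun graph 9 5 σ) (hT : arrivalTime 5 σ ≤ 4) (h₃ : σ 3 ≠ 3) :
    σ 3 = 4 :=
  key _ (h.mem_ballFinset 3) (h.mem_ballFinset_of_arrivalTime_le (m := 3) (k := 1) hT) h₃
where
  key : ∀ x ∈ graph.ballFinset 9 3, 5 ∈ graph.ballFinset x 1 → x ≠ 3 → x = 4 := by decide

theorem five_le_arrivalTime_bot (h : IsPathFun graph 6 8 σ) (h₂ : σ 2 ≠ 5) :
    5 ≤ arrivalTime 8 σ := by
  by_contra! hT
  exact h₂ (key _ (h.mem_ballFinset 2) (h.mem_ballFinset_of_arrivalTime_le (m := 2) (k := 2)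
    (by omega)))
where
  key : ∀ x ∈ graph.ballFinset 6 2, 8 ∈ graph.ballFinset x 2 → x = 5 := by decide

theorem bot_trapped (h : IsPathFun graph 6 8 σ) (hdet : ∀ n, σ n ≠ topDetour n)
    {τ : ℕ → Fin 10} (hτ₃ : τ 3 = 4) (hτ : ∀ n ≥ 4, τ n = 5) (hστ : ¬ Collide σ τ) : False := by
  have at_five : ∀ n, σ n = 5 → n = 3 := by
    intro n hn
    match n with
    | 0 => exact absurd (h.1 ▸ hn) (by decide)
    | 1 => exact absurd (hn ▸ h.mem_ballFinset 1) (by decide)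
    | 2 => exact absurd hn (hdet 2)
    | 3 => rfl
    | n + 4 => exact absurd (Or.inl ⟨n + 4, hn.trans (hτ _ (by omega)).symm⟩) hστ
  have escape : ∀ t₀, σ t₀ ∈ pocket → ∃ t ≥ t₀, σ (t + 1) = 5 := by
    intro t₀ ht₀
    obtain ⟨T, hT⟩ := h.2.2
    obtain ⟨t, ht, hin, hout⟩ := Nat.exists_ge_and_not_succ (P := fun n => σ n ∈ pocket) ht₀
      (le_max_left t₀ T) (by rw [hT _ (le_max_right _ _)]; decide)
    exact ⟨t, ht, exit_pocket _ hin _ (mem_ballFinset_of_step h.2.1 t 1) hout⟩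
  obtain ⟨t, -, ht⟩ := escape 0 (h.1 ▸ by decide)
  have h₃ : σ 3 = 5 := at_five _ ht ▸ ht
  have h₄ : σ 4 ∈ pocket := by
    refine leave_five _ (h₃ ▸ mem_ballFinset_of_step h.2.1 3 1)
      (fun h₄ => absurd (at_five 4 h₄) (by decide)) (hdet 4) fun h₄ => hστ (Or.inr ⟨3, ?_, ?_⟩)
    · rw [h₃, hτ 4 le_rfl]
    · rw [h₄, hτ₃]
  obtain ⟨t, ht₄, ht⟩ := escape 4 h₄
  have := at_five _ ht
  omega
where
  exit_pocket : ∀ x ∈ pocket, ∀ y ∈ graph.ballFinset x 1, y ∉ pocket → y = 5 := by decide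
  leave_five : ∀ y ∈ graph.ballFinset 5 1, y ≠ 5 → y ≠ 3 → y ≠ 4 → y ∈ pocket := by decide

-- Reducible, so that `Fin mapf.M` and `mapf.V` are seen as `Fin 3` and `Fin 10`.
abbrev mapf : MAPF where
  V := Fin 10
  G := graph
  conn := connected
  M := 3
  s := ![0, 9, 6]
  t := ![3, 5, 8]
  s_inj := by decide
  t_inj := by decide

def plan : Fin 3 → ℕ → Fin 10 := ![topCorridor, midDelayed, botPath]

theorem isPathFun_topCorridor : IsPathFun graph 0 3 topCorridor :=
  isPathFun_listPath rfl (by decide)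

theorem isPathFun_topDetour : IsPathFun graph 0 3 topDetour :=
  isPathFun_listPath rfl (by decide)

theorem isPathFun_midDelayed : IsPathFun graph 9 5 midDelayed :=
  isPathFun_listPath rfl (by decide)

theorem isPathFun_midDirect : IsPathFun graph 9 5 midDirect :=
  isPathFun_listPath rfl (by decide)

theorem isPathFun_botPath : IsPathFun graph 6 8 botPath :=
  isPathFun_listPath rfl (by decide)

theorem plan_solution : mapf.Solution plan := by
  refine MAPF.solution_of_lt (fun i => ?_) (fun i j hij => ?_)
  · fin_cases i
    exacts [isPathFun_topCorridor, isPathFun_midDelayed, isPathFun_botPath]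
  · fin_cases i <;> fin_cases j <;> first
      | exact absurd hij (by decide)
      | exact not_collide_listPath (by decide)

theorem plan_consistent : mapf.Consistent plan (· < ·) := by
  refine MAPF.consistent_of_forall_le plan_solution (fun i => lt_irrefl i) fun i σ hσ hcol => ?_
  fin_cases i
  · exact (arrivalTime_listPath_le _ _).trans (three_le_arrivalTime_top hσ)
  · refine (arrivalTime_listPath_le _ _).trans (five_le_arrivalTime_mid hσ fun h₁ => ?_)
    exact hcol 0 (by decide) (Or.inl ⟨1, h₁⟩)
  · exact (arrivalTime_listPath_le _ _).trans (four_le_arrivalTime_bot hσ)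

theorem flowtime_plan_le : mapf.flowtime plan ≤ 12 := by
  have h₀ : arrivalTime 3 topCorridor ≤ 3 := arrivalTime_listPath_le _ _
  have h₁ : arrivalTime 5 midDelayed ≤ 5 := arrivalTime_listPath_le _ _
  have h₂ : arrivalTime 8 botPath ≤ 4 := arrivalTime_listPath_le _ _
  simp only [MAPF.flowtime, Fin.sum_univ_three]
  change arrivalTime 3 topCorridor + arrivalTime 5 midDelayed + arrivalTime 8 botPath ≤ 12
  omega

theorem twelve_le_flowtime {π : Fin 3 → ℕ → Fin 10} (hπ : mapf.Solution π) :
    12 ≤ mapf.flowtime π := by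
  have h₀ := three_le_arrivalTime_top (hπ.1 0)
  have h₁ := four_le_arrivalTime_mid (hπ.1 1)
  have h₂ := four_le_arrivalTime_bot (hπ.1 2)
  simp only [MAPF.flowtime, Fin.sum_univ_three]
  change 12 ≤ arrivalTime 3 (π 0) + arrivalTime 5 (π 1) + arrivalTime 8 (π 2)
  by_cases hfast : arrivalTime 3 (π 0) ≤ 3
  · rcases top_one_eq_one_or_two_eq_five (hπ.1 0) hfast with h | h
    · have := five_le_arrivalTime_mid (hπ.1 1) fun h' =>
        hπ.2 1 0 (by decide) (Or.inl ⟨1, h'.trans h.symm⟩)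
      omega
    · have := five_le_arrivalTime_bot (hπ.1 2) fun h' =>
        hπ.2 2 0 (by decide) (Or.inl ⟨2, h'.trans h.symm⟩)
      omega
  · omega

theorem ne_topDetour_of_consistent {π : Fin 3 → ℕ → Fin 10} (hπ : mapf.Solution π)
    (hc : mapf.Consistent π (· < ·)) : π 0 ≠ topDetour := by
  intro h₀
  have hdet : ∀ i ≠ 0, ∀ n, π i n ≠ topDetour n := fun i hi n hn =>
    hπ.2 i 0 hi (Or.inl ⟨n, hn.trans (congrFun h₀ n).symm⟩)
  have hmid : arrivalTime 5 (π 1) ≤ 4 := by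
    refine ((hc 1).2 ⟨midDirect, isPathFun_midDirect, fun j hj => ?_, rfl⟩).trans
      (arrivalTime_listPath_le _ _)
    fin_cases j
    · exact h₀ ▸ not_collide_listPath (by decide)
    all_goals exact absurd hj (by decide)
  exact bot_trapped (hπ.1 2) (hdet 2 (by decide))
    (mid_three_eq_four (hπ.1 1) hmid (hdet 1 (by decide) 3))
    (fun n hn => (hπ.1 1).apply_of_arrivalTime_le (hmid.trans hn)) (hπ.2 2 1 (by decide))

theorem arrivalTime_topDetour : arrivalTime 3 topDetour = graph.dist 0 3 := by
  have hdist : graph.dist 0 3 = 3 := le_antisymm (dist_le_of_mem_ballFinset (by decide))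
    ((connected.preconnected 0 3).le_dist_of_le_arrivalTime fun _ => three_le_arrivalTime_top)
  rw [hdist]
  exact le_antisymm (arrivalTime_listPath_le _ _) (three_le_arrivalTime_top isPathFun_topDetour)

end TrapExample

/-- There exist an OP-solvable MAPF instance, a total priority ordering `r`, a
flowtime-optimal solution consistent with `r`, and an individually optimal path `π'`
for the highest-priority agent (its arrival time equals the graph distance from its
start to its target), such that no solution consistent with `r` assigns `π'` to the
highest-priority agent: unlucky tie-breaking can make prioritized planning fail. -/
theorem stmt10 :
    ∃ (P : MAPF) (r : Fin P.M → Fin P.M → Prop), IsTotalPO r ∧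
      ∃ h : Fin P.M, (∀ j, j ≠ h → r h j) ∧
        (∃ Lstar, P.Solution Lstar ∧ P.Consistent Lstar r ∧
          ∀ π, P.Solution π → P.flowtime Lstar ≤ P.flowtime π) ∧
        ∃ π' : ℕ → P.V, P.IsPath h π' ∧
          P.arr h π' = P.G.dist (P.s h) (P.t h) ∧
          ∀ π, P.Solution π → P.Consistent π r → π h ≠ π' := by
  open TrapExample in
  exact ⟨mapf, (· < ·), isTotalPO_lt 3, 0, fun _ => Fin.pos_of_ne_zero,
    ⟨plan, plan_solution, plan_consistent,
      fun _ hπ => flowtime_plan_le.trans (twelve_le_flowtime hπ)⟩,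
    topDetour, isPathFun_topDetour, arrivalTime_topDetour,
    fun _ => ne_topDetour_of_consistent⟩
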